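/- arXiv:1403.6299 — 4 statements merged into one kernel-verified Lean document; each statement's English description precedes it below -/
import Mathlib

section
/- Let M² > 0 be a real number, θ ∈ ℝ with cos θ > 0, and let ρ : ℝ → ℝ be continuous and nonnegative on [0,∞) with a polynomial bound: there exist C ≥ 0 and p ≥ 0 such that 0 ≤ ρ(s) ≤ C(1+s)^p for all s ≥ 0. Then: (i) for every natural number n with n > p, the function s ↦ (1 + s e^{−iθ}/(n M²))^{−(n+1)} ρ(s) is integrable on (0,∞); (ii) the function s ↦ exp(−s e^{−iθ}/M²) ρ(s) is integrable on (0,∞); and (iii) lim_{n→∞} ∫₀^∞ (1 + s e^{−iθ}/(n M²))^{−(n+1)} ρ(s) ds = ∫₀^∞ exp(−s e^{−iθ}/M²) ρ(s) ds. -/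
/-!
Write `b = e^{-iθ}/M²`, so that `Re b = cos θ / M² > 0`. Pointwise in `s`, the kernel
`(1 + s b/n)^{-(n+1)}` tends to `e^{-s b}` because `(1 + t/n)^n → e^t`. Since `Re b > 0`,
`|1 + s b/n| ≥ 1 + s Re b/n`, and `(1 + x/n)^n` increases with `n` for `x ≥ 0`, so for `n ≥ N`
the integrands are dominated by `C (1+s)^p (1 + s Re b/N)^{-N}`, which is integrable once
`N > p + 1`. Dominated convergence gives the limit.
-/

open MeasureTheory Filter Complex Real Set

theorem one_add_div_pow_le_one_add_div_pow {x : ℝ} (hx : 0 ≤ x) {N n : ℕ} (hN : 0 < N)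
    (hNn : N ≤ n) : (1 + x / N) ^ N ≤ (1 + x / n) ^ n := by
  have hN' : (0 : ℝ) < N := by exact_mod_cast hN
  have hn' : (0 : ℝ) < n := by exact_mod_cast hN.trans_le hNn
  have hratio : 1 ≤ (n : ℝ) / N := by rw [one_le_div hN']; exact_mod_cast hNn
  -- Bernoulli's inequality with the real exponent `n / N ≥ 1`
  have hbernoulli : 1 + x / N ≤ (1 + x / n) ^ ((n : ℝ) / N) := by
    calc 1 + x / N = 1 + (n / N) * (x / n) := by field_simp
      _ ≤ _ := one_add_mul_self_le_rpow_one_add (by linarith [div_nonneg hx hn'.le]) hratio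
  calc (1 + x / N) ^ N ≤ ((1 + x / n) ^ ((n : ℝ) / N)) ^ N := by gcongr
    _ = (1 + x / n) ^ n := by
      rw [← Real.rpow_natCast, ← Real.rpow_mul (by positivity), div_mul_cancel₀ _ hN'.ne',
        Real.rpow_natCast]

theorem integrableOn_Ioi_one_add_rpow_mul_inv_pow {p d : ℝ} (hd : 0 < d) {m : ℕ}
    (hm : p + 1 < m) :
    IntegrableOn (fun s : ℝ => (1 + s) ^ p * ((1 + s * d) ^ m)⁻¹) (Ioi 0) := by
  set e := min 1 d
  have he : 0 < e := lt_min one_pos hd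
  have hbound : ∀ s : ℝ, 0 < s →
      (1 + s) ^ p * ((1 + s * d) ^ m)⁻¹ ≤ (e ^ m)⁻¹ * (1 + ‖s‖) ^ (-(m - p)) := by
    intro s hs
    have hle : e * (1 + s) ≤ 1 + s * d := by
      nlinarith [min_le_left 1 d, min_le_right 1 d]
    calc (1 + s) ^ p * ((1 + s * d) ^ m)⁻¹ ≤ (1 + s) ^ p * ((e * (1 + s)) ^ m)⁻¹ := by
          gcongr
      _ = (e ^ m)⁻¹ * (1 + ‖s‖) ^ (-(m - p)) := by
          rw [Real.norm_of_nonneg hs.le, neg_sub, Real.rpow_sub (by positivity),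
            Real.rpow_natCast, mul_pow]
          field_simp
  have hmajorant : Integrable (fun s : ℝ => (e ^ m)⁻¹ * (1 + ‖s‖) ^ (-(m - p))) :=
    (integrable_one_add_norm (by simp; linarith)).const_mul _
  refine hmajorant.integrableOn.mono' (by fun_prop : Measurable _).aestronglyMeasurable ?_
  filter_upwards [ae_restrict_mem measurableSet_Ioi] with s (hs : 0 < s)
  rw [Real.norm_of_nonneg (by positivity)]
  exact hbound s hs

theorem Complex.norm_one_add_zpow_neg_le {z : ℂ} (hz : 0 ≤ z.re) (m : ℕ) :
    ‖(1 + z) ^ (-(m : ℤ))‖ ≤ ((1 + z.re) ^ m)⁻¹ := by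
  rw [zpow_neg, zpow_natCast, norm_inv, norm_pow]
  gcongr
  calc 1 + z.re = (1 + z).re := by simp
    _ ≤ ‖1 + z‖ := re_le_norm _

theorem Complex.tendsto_one_add_div_zpow_neg_succ (t : ℂ) :
    Tendsto (fun n : ℕ => (1 + t / n) ^ (-((n : ℤ) + 1))) atTop (nhds (exp (-t))) := by
  have hone : Tendsto (fun n : ℕ => 1 + t / n) atTop (nhds 1) := by
    simpa using tendsto_const_nhds.add (tendsto_const_div_atTop_nhds_zero_nat t)
  have hlim := ((tendsto_one_add_div_pow_exp t).mul hone).inv₀ (by simp [exp_ne_zero])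
  rw [mul_one, ← exp_neg] at hlim
  refine hlim.congr fun n => ?_
  rw [← pow_succ, ← zpow_natCast, ← zpow_neg]
  push_cast
  rfl

noncomputable def borelKernel (b : ℂ) (n : ℕ) (s : ℝ) : ℂ :=
  (1 + s * b / n) ^ (-((n : ℤ) + 1))

section BorelKernel

variable {b : ℂ} {ρ : ℝ → ℂ} {C p : ℝ}

theorem tendsto_borelKernel (b : ℂ) (s : ℝ) :
    Tendsto (fun n => borelKernel b n s) atTop (nhds (exp (-(s * b)))) :=
  Complex.tendsto_one_add_div_zpow_neg_succ _

theorem norm_borelKernel_le (hb : 0 ≤ b.re) (n : ℕ) {s : ℝ} (hs : 0 ≤ s) :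
    ‖borelKernel b n s‖ ≤ ((1 + s * (b.re / n)) ^ (n + 1))⁻¹ := by
  have hre : ((s : ℂ) * b / n).re = s * (b.re / n) := by simp [mul_div_assoc]
  have hbound := Complex.norm_one_add_zpow_neg_le (z := s * b / n) (by rw [hre]; positivity)
    (n + 1)
  rw [hre] at hbound
  exact_mod_cast hbound

theorem norm_borelKernel_mul_le (hb : 0 ≤ b.re) (hρ : ∀ s > 0, ‖ρ s‖ ≤ C * (1 + s) ^ p)
    (n : ℕ) {s : ℝ} (hs : 0 < s) :
    ‖borelKernel b n s * ρ s‖ ≤ C * (1 + s) ^ p * ((1 + s * (b.re / n)) ^ (n + 1))⁻¹ := by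
  rw [norm_mul, mul_comm]
  exact mul_le_mul (hρ s hs) (norm_borelKernel_le hb n hs.le) (norm_nonneg _)
    ((norm_nonneg _).trans (hρ s hs))

theorem norm_borelKernel_mul_le_of_le (hb : 0 ≤ b.re)
    (hρ : ∀ s > 0, ‖ρ s‖ ≤ C * (1 + s) ^ p) {N n : ℕ} (hN : 0 < N) (hNn : N ≤ n) {s : ℝ} (hs : 0 < s) :
    ‖borelKernel b n s * ρ s‖ ≤ C * (1 + s) ^ p * ((1 + s * (b.re / N)) ^ N)⁻¹ := by
  refine (norm_borelKernel_mul_le hb hρ n hs).trans ?_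
  have hC : 0 ≤ C * (1 + s) ^ p := (norm_nonneg _).trans (hρ s hs)
  have hx : 0 ≤ s * b.re := by positivity
  have hmono : (1 + s * (b.re / N)) ^ N ≤ (1 + s * (b.re / n)) ^ (n + 1) := by
    simp only [← mul_div_assoc]
    calc (1 + s * b.re / N) ^ N ≤ (1 + s * b.re / n) ^ n :=
          one_add_div_pow_le_one_add_div_pow hx hN hNn
      _ ≤ (1 + s * b.re / n) ^ (n + 1) :=
          pow_le_pow_right₀ (le_add_of_nonneg_right (by positivity)) n.le_succ
  gcongr

theorem aestronglyMeasurable_borelKernel_mul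
    (hρm : AEStronglyMeasurable ρ (volume.restrict (Ioi 0))) (n : ℕ) :
    AEStronglyMeasurable (fun s => borelKernel b n s * ρ s) (volume.restrict (Ioi 0)) :=
  (by unfold borelKernel; fun_prop : Measurable (borelKernel b n)).aestronglyMeasurable.mul
    hρm

theorem integrableOn_borelKernel_mul (hb : 0 < b.re)
    (hρm : AEStronglyMeasurable ρ (volume.restrict (Ioi 0)))
    (hρ : ∀ s > 0, ‖ρ s‖ ≤ C * (1 + s) ^ p) {n : ℕ} (hn : 0 < n) (hpn : p < n) :
    IntegrableOn (fun s => borelKernel b n s * ρ s) (Ioi 0) := by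
  have hmajorant := (integrableOn_Ioi_one_add_rpow_mul_inv_pow (p := p)
    (div_pos hb (Nat.cast_pos.mpr hn)) (m := n + 1) (by push_cast; linarith)).const_mul C
  refine hmajorant.mono' (aestronglyMeasurable_borelKernel_mul hρm n) ?_
  filter_upwards [ae_restrict_mem measurableSet_Ioi] with s hs
  rw [← mul_assoc]
  exact norm_borelKernel_mul_le hb.le hρ n hs

theorem exists_integrableOn_bound_borelKernel_mul (hb : 0 < b.re)
    (hρ : ∀ s > 0, ‖ρ s‖ ≤ C * (1 + s) ^ p) :
    ∃ g : ℝ → ℝ, IntegrableOn g (Ioi 0) ∧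
      ∀ᶠ n : ℕ in atTop, ∀ s > 0, ‖borelKernel b n s * ρ s‖ ≤ g s := by
  obtain ⟨N, hN⟩ := exists_nat_gt (p + 1)
  have hN1 : 0 < N + 1 := N.succ_pos
  refine ⟨fun s => C * ((1 + s) ^ p * ((1 + s * (b.re / ↑(N + 1))) ^ (N + 1))⁻¹), ?_, ?_⟩
  · exact (integrableOn_Ioi_one_add_rpow_mul_inv_pow (div_pos hb (Nat.cast_pos.mpr hN1))
      (by push_cast; linarith)).const_mul C
  · filter_upwards [eventually_ge_atTop (N + 1)] with n hn s hs
    rw [← mul_assoc]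
    exact norm_borelKernel_mul_le_of_le hb.le hρ hN1 hn hs

theorem integrableOn_exp_neg_mul_mul (hb : 0 < b.re)
    (hρm : AEStronglyMeasurable ρ (volume.restrict (Ioi 0)))
    (hρ : ∀ s > 0, ‖ρ s‖ ≤ C * (1 + s) ^ p) :
    IntegrableOn (fun s : ℝ => exp (-(s * b)) * ρ s) (Ioi 0) := by
  obtain ⟨g, hg, hbound⟩ := exists_integrableOn_bound_borelKernel_mul hb hρ
  refine hg.mono' ((by fun_prop : Measurable fun s : ℝ => exp (-(s * b))).aestronglyMeasurable.mul
    hρm) ?_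
  filter_upwards [ae_restrict_mem measurableSet_Ioi] with s hs
  exact le_of_tendsto ((tendsto_borelKernel b s).mul_const (ρ s)).norm
    (hbound.mono fun n hn => hn s hs)

theorem tendsto_integral_borelKernel_mul (hb : 0 < b.re)
    (hρm : AEStronglyMeasurable ρ (volume.restrict (Ioi 0)))
    (hρ : ∀ s > 0, ‖ρ s‖ ≤ C * (1 + s) ^ p) :
    Tendsto (fun n : ℕ => ∫ s in Ioi 0, borelKernel b n s * ρ s) atTop
      (nhds (∫ s in Ioi (0 : ℝ), exp (-(s * b)) * ρ s)) := by
  obtain ⟨g, hg, hbound⟩ := exists_integrableOn_bound_borelKernel_mul hb hρ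
  refine tendsto_integral_filter_of_dominated_convergence g
    (Eventually.of_forall (aestronglyMeasurable_borelKernel_mul hρm))
    (hbound.mono fun n hn => ?_) hg (ae_of_all _ fun s => (tendsto_borelKernel b s).mul_const _)
  filter_upwards [ae_restrict_mem measurableSet_Ioi] with s hs
  exact hn s hs

end BorelKernel

theorem borel_limit_integral_interchange_general
    (M2 : ℝ) (hM2 : 0 < M2) (θ : ℝ) (hθ : 0 < Real.cos θ)
    (ρ : ℝ → ℝ) (hρc : ContinuousOn ρ (Set.Ici 0))
    (C p : ℝ) (hp : 0 ≤ p)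
    (hρ : ∀ s : ℝ, 0 ≤ s → 0 ≤ ρ s ∧ ρ s ≤ C * (1 + s) ^ p) :
    (∀ n : ℕ, p < (n : ℝ) →
      IntegrableOn
        (fun s : ℝ =>
          ((1 : ℂ) + (s : ℂ) * Complex.exp (-(θ * Complex.I)) / ((n : ℂ) * (M2 : ℂ))) ^
              (-((n : ℤ) + 1)) * (ρ s : ℂ))
        (Set.Ioi 0)) ∧
    IntegrableOn
      (fun s : ℝ =>
        Complex.exp (-((s : ℂ) * Complex.exp (-(θ * Complex.I))) / (M2 : ℂ)) * (ρ s : ℂ))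
      (Set.Ioi 0) ∧
    Tendsto
      (fun n : ℕ =>
        ∫ s in Set.Ioi (0 : ℝ),
          ((1 : ℂ) + (s : ℂ) * Complex.exp (-(θ * Complex.I)) / ((n : ℂ) * (M2 : ℂ))) ^
              (-((n : ℤ) + 1)) * (ρ s : ℂ))
      atTop
      (nhds (∫ s in Set.Ioi (0 : ℝ),
        Complex.exp (-((s : ℂ) * Complex.exp (-(θ * Complex.I))) / (M2 : ℂ)) * (ρ s : ℂ))) := by
  obtain ⟨b, hb_def⟩ : ∃ b : ℂ, b = exp (-(θ * I)) / M2 := ⟨_, rfl⟩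
  have hb : 0 < b.re := by
    rw [hb_def, div_ofReal_re, ← neg_mul, ← ofReal_neg, exp_ofReal_mul_I_re, Real.cos_neg]
    exact div_pos hθ hM2
  have hρm : AEStronglyMeasurable (fun s => (ρ s : ℂ)) (volume.restrict (Ioi 0)) :=
    (continuous_ofReal.comp_continuousOn (hρc.mono Ioi_subset_Ici_self)).aestronglyMeasurable
      measurableSet_Ioi
  have hρ' : ∀ s > 0, ‖(ρ s : ℂ)‖ ≤ C * (1 + s) ^ p := fun s hs => by
    rw [norm_real, Real.norm_of_nonneg (hρ s hs.le).1]
    exact (hρ s hs.le).2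
  have hkernel : ∀ (n : ℕ) (s : ℝ),
      ((1 : ℂ) + s * exp (-(θ * I)) / (n * M2)) ^ (-((n : ℤ) + 1)) = borelKernel b n s :=
    fun n s => by rw [borelKernel, hb_def]; ring_nf
  have hexp : ∀ s : ℝ, exp (-(s * exp (-(θ * I))) / M2) = exp (-(s * b)) :=
    fun s => by rw [hb_def]; ring_nf
  simp only [hkernel, hexp]
  exact ⟨fun n hn => integrableOn_borelKernel_mul hb hρm hρ'
      (Nat.cast_pos.mp (hp.trans_lt hn)) hn,
    integrableOn_exp_neg_mul_mul hb hρm hρ', tendsto_integral_borelKernel_mul hb hρm hρ'⟩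

/-- Interchange of the Borel-transform limit `n → ∞` with the integral over `s`,
valid when `cos θ > 0`, for a spectral function with polynomial bound. -/
theorem borel_limit_integral_interchange
    (M2 : ℝ) (hM2 : 0 < M2) (θ : ℝ) (hθ : 0 < Real.cos θ)
    (ρ : ℝ → ℝ) (hρc : ContinuousOn ρ (Set.Ici 0))
    (C p : ℝ) (hC : 0 ≤ C) (hp : 0 ≤ p)
    (hρ : ∀ s : ℝ, 0 ≤ s → 0 ≤ ρ s ∧ ρ s ≤ C * (1 + s) ^ p) :
    (∀ n : ℕ, p < (n : ℝ) →
      IntegrableOn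
        (fun s : ℝ =>
          ((1 : ℂ) + (s : ℂ) * Complex.exp (-(θ * Complex.I)) / ((n : ℂ) * (M2 : ℂ))) ^
              (-((n : ℤ) + 1)) * (ρ s : ℂ))
        (Set.Ioi 0)) ∧
    IntegrableOn
      (fun s : ℝ =>
        Complex.exp (-((s : ℂ) * Complex.exp (-(θ * Complex.I))) / (M2 : ℂ)) * (ρ s : ℂ))
      (Set.Ioi 0) ∧
    Tendsto
      (fun n : ℕ =>
        ∫ s in Set.Ioi (0 : ℝ),
          ((1 : ℂ) + (s : ℂ) * Complex.exp (-(θ * Complex.I)) / ((n : ℂ) * (M2 : ℂ))) ^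
              (-((n : ℤ) + 1)) * (ρ s : ℂ))
      atTop
      (nhds (∫ s in Set.Ioi (0 : ℝ),
        Complex.exp (-((s : ℂ) * Complex.exp (-(θ * Complex.I))) / (M2 : ℂ)) * (ρ s : ℂ))) :=
  borel_limit_integral_interchange_general M2 hM2 θ hθ ρ hρc C p hp hρ
end

section
/- Let M² > 0, θ ∈ (−π, π), s ≥ 0 a real number, and k ≥ 1 an integer. Define f : (0,∞) → ℂ by f(X) = 1/(s + X e^{iθ})^k (note s + X e^{iθ} ≠ 0 for all X > 0). Then the Borel transform of f at Borel mass M² exists and equals lim_{n→∞} [(n M²)^n/(n−1)!] · (−1)^n · f^{(n)}(n M²) = [1/(k−1)!] · (M² e^{iθ})^{−k} · exp(−s/(M² e^{iθ})). -/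
open MeasureTheory Filter Complex Real

/-!
The `n`-th derivative of `(s + X e)^(-k)` is `(-e)^n k(k+1)⋯(k+n-1) (s + X e)^(-k-n)`.
At `X = n M²`, writing `s + n M² e = n M² e (1 + c/n)` with `c = s/(M² e)`, the `n`-th term of
the Borel sequence becomes
`[n(n+1)⋯(n+k-1) / n^k] · (M² e)^(-k)/(k-1)! · (1 + c/n)^(-(n+k))`,
whose three factors tend to `1`, `(M² e)^(-k)/(k-1)!` and `exp(-c)`. Only large `n` matter,
and for those `‖s‖ < n M² = ‖n M² e‖`, so `f` is smooth near `n M²`.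
-/

open Finset Topology

theorem iteratedDeriv_add_mul_zpow (a b : ℂ) (m : ℤ) (n : ℕ) {X : ℝ} (hX : a + X * b ≠ 0) :
    iteratedDeriv n (fun Y : ℝ => (a + Y * b) ^ m) X =
      b ^ n * (∏ i ∈ range n, ((m : ℂ) - i)) * (a + X * b) ^ (m - n) := by
  induction n generalizing X with
  | zero => simp
  | succ n ih =>
    have hopen : IsOpen {Y : ℝ | a + Y * b ≠ 0} :=
      isOpen_ne_fun (by fun_prop) continuous_const
    have hlocal := Filter.eventuallyEq_of_mem (hopen.mem_nhds hX) fun Y hY => ih hY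
    have hlin : HasDerivAt (fun Y : ℝ => a + Y * b) b X := by
      simpa using ((Complex.ofRealCLM.hasDerivAt (x := X)).mul_const b).const_add a
    have hpow := ((hasDerivAt_zpow (m - n) _ (Or.inl hX)).comp X hlin).const_mul
      (b ^ n * ∏ i ∈ range n, ((m : ℂ) - i))
    rw [iteratedDeriv_succ, hlocal.deriv_eq]
    refine hpow.deriv.trans ?_
    rw [prod_range_succ, show m - n - 1 = m - (n + 1 : ℕ) by push_cast; ring]
    push_cast
    ring

theorem prod_range_neg_sub_eq (k n : ℕ) :
    ∏ i ∈ range n, (((-k : ℤ) : ℂ) - i) = (-1) ^ n * (k.ascFactorial n : ℂ) := by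
  calc ∏ i ∈ range n, (((-k : ℤ) : ℂ) - i) = ∏ i ∈ range n, -((k : ℂ) + i) :=
        prod_congr rfl fun i _ => by push_cast; ring
    _ = _ := by
      rw [prod_neg, card_range, Nat.ascFactorial_eq_prod_range]
      push_cast
      rfl

theorem factorial_mul_ascFactorial_comm {n k : ℕ} (hn : 1 ≤ n) (hk : 1 ≤ k) :
    (k - 1).factorial * k.ascFactorial n = (n - 1).factorial * n.ascFactorial k := by
  rw [Nat.factorial_mul_ascFactorial' _ _ hk, Nat.factorial_mul_ascFactorial' _ _ hn, add_comm]

theorem tendsto_ascFactorial_div_pow (k : ℕ) :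
    Tendsto (fun n : ℕ => (n.ascFactorial k : ℂ) / (n : ℂ) ^ k) atTop (𝓝 1) := by
  have hfactor : ∀ j ∈ range k, Tendsto (fun n : ℕ => 1 + (j : ℂ) / n) atTop (𝓝 1) :=
    fun j _ => by simpa using (tendsto_const_div_atTop_nhds_zero_nat (j : ℂ)).const_add 1
  have hprod := tendsto_finsetProd _ hfactor
  rw [prod_const_one] at hprod
  refine hprod.congr' ?_
  filter_upwards [eventually_ne_atTop 0] with n hn
  calc ∏ j ∈ range k, (1 + (j : ℂ) / n) = ∏ j ∈ range k, (((n : ℂ) + j) / n) :=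
        prod_congr rfl fun j _ => by field_simp
    _ = _ := by
      rw [prod_div_distrib, prod_const, card_range, Nat.ascFactorial_eq_prod_range]
      push_cast
      rfl

theorem tendsto_one_add_div_pow_add_exp (c : ℂ) (k : ℕ) :
    Tendsto (fun n : ℕ => (1 + c / n) ^ (n + k)) atTop (𝓝 (exp c)) := by
  have hk : Tendsto (fun n : ℕ => (1 + c / n) ^ k) atTop (𝓝 1) := by
    simpa using ((tendsto_const_div_atTop_nhds_zero_nat c).const_add 1).pow k
  simpa [pow_add] using (Complex.tendsto_one_add_div_pow_exp c).mul hk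

/-- The Borel transform of `f` at Borel mass `M2` is the limit of this sequence. -/
noncomputable def borelSeq (f : ℝ → ℂ) (M2 : ℝ) (n : ℕ) : ℂ :=
  ((n : ℂ) * M2) ^ n / ((n - 1).factorial : ℂ) * (-1) ^ n * iteratedDeriv n f (n * M2)

theorem borelSeq_add_mul_zpow_neg {a b : ℂ} {M2 : ℝ} {k n : ℕ} (hk : 1 ≤ k) (hn : 1 ≤ n)
    (hMb : (M2 : ℂ) * b ≠ 0) (hX : a + ((n * M2 : ℝ) : ℂ) * b ≠ 0) :
    borelSeq (fun Y : ℝ => (a + Y * b) ^ (-k : ℤ)) M2 n =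
      (n.ascFactorial k : ℂ) / (n : ℂ) ^ k * (1 / (k - 1).factorial * (M2 * b) ^ (-k : ℤ)) *
        ((1 + a / (M2 * b) / n) ^ (n + k))⁻¹ := by
  obtain ⟨hM, hb⟩ := mul_ne_zero_iff.mp hMb
  have hn0 : (n : ℂ) ≠ 0 := by exact_mod_cast (by omega : n ≠ 0)
  have hsplit : a + ((n * M2 : ℝ) : ℂ) * b = n * (M2 * b) * (1 + a / (M2 * b) / n) := by
    push_cast
    field_simp
    ring
  have hfact : (k.ascFactorial n : ℂ) =
      (n - 1).factorial * n.ascFactorial k / (k - 1).factorial := by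
    rw [eq_div_iff (Nat.cast_ne_zero.mpr (Nat.factorial_ne_zero _)), mul_comm]
    exact_mod_cast factorial_mul_ascFactorial_comm hn hk
  have hu : 1 + a / (M2 * b) / n ≠ 0 := by
    rintro hu
    rw [hsplit, hu, mul_zero] at hX
    exact hX rfl
  rw [borelSeq, iteratedDeriv_add_mul_zpow a b _ n hX, prod_range_neg_sub_eq, hsplit, hfact,
    show (-k : ℤ) - n = -((n + k : ℕ) : ℤ) by push_cast; ring, zpow_neg, zpow_neg, zpow_natCast,
    zpow_natCast]
  generalize 1 + a / (M2 * b) / n = u at hu ⊢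
  have hnfact : ((n - 1).factorial : ℂ) ≠ 0 := Nat.cast_ne_zero.mpr (Nat.factorial_ne_zero _)
  field_simp
  rw [← pow_mul, pow_mul', neg_one_sq, one_pow, mul_one]
  ring

theorem borel_transform_cauchy_kernel_pow_general
    (M2 : ℝ) (hM2 : 0 < M2) (θ : ℝ)
    (s : ℝ) (k : ℕ) (hk : 1 ≤ k)
    (f : ℝ → ℂ)
    (hf : ∀ X : ℝ, 0 < X →
      f X = 1 / ((s : ℂ) + (X : ℂ) * Complex.exp (θ * Complex.I)) ^ k) :
    Tendsto
      (fun n : ℕ =>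
        (((n : ℂ) * (M2 : ℂ)) ^ n / (Nat.factorial (n - 1) : ℂ)) * (-1 : ℂ) ^ n *
          iteratedDeriv n f ((n : ℝ) * M2))
      atTop
      (nhds ((1 / (Nat.factorial (k - 1) : ℂ)) *
        ((M2 : ℂ) * Complex.exp (θ * Complex.I)) ^ (-(k : ℤ)) *
        Complex.exp (-(s : ℂ) / ((M2 : ℂ) * Complex.exp (θ * Complex.I))))) := by
  set e := exp (θ * I)
  have hMe : (M2 : ℂ) * e ≠ 0 := mul_ne_zero (ofReal_ne_zero.mpr hM2.ne') (exp_ne_zero _)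
  have hlim := ((tendsto_ascFactorial_div_pow k).mul_const
    (1 / (k - 1).factorial * (M2 * e) ^ (-k : ℤ))).mul
    ((tendsto_one_add_div_pow_add_exp (s / (M2 * e)) k).inv₀ (exp_ne_zero _))
  rw [one_mul, ← Complex.exp_neg, ← neg_div] at hlim
  refine hlim.congr' ?_
  have hlarge : ∀ᶠ n : ℕ in atTop, ‖(s : ℂ)‖ < n * M2 :=
    (tendsto_natCast_atTop_atTop.atTop_mul_const hM2).eventually_gt_atTop _
  filter_upwards [eventually_ge_atTop 1, hlarge] with n hn hsn
  have hX : 0 < (n : ℝ) * M2 := by positivity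
  have hden : (s : ℂ) + ((n * M2 : ℝ) : ℂ) * e ≠ 0 := by
    intro h
    have hnorm := congrArg norm (eq_neg_of_add_eq_zero_right h)
    rw [norm_neg, norm_mul, norm_real, Real.norm_of_nonneg hX.le, norm_exp_ofReal_mul_I,
      mul_one] at hnorm
    linarith
  have hfg : f =ᶠ[𝓝 (n * M2)] fun Y : ℝ => ((s : ℂ) + Y * e) ^ (-k : ℤ) :=
    eventuallyEq_of_mem (Ioi_mem_nhds hX) fun Y hY => by
      rw [hf Y hY, zpow_neg, zpow_natCast, one_div]
  rw [← borelSeq_add_mul_zpow_neg hk hn hMe hden, borelSeq, hfg.iteratedDeriv_eq]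

/-- Borel transform of `1/(s − z)^k` with `z = −X e^{iθ}`:
`B̂ (1/(s−z))^k = (1/(k−1)!) (M² e^{iθ})^{−k} e^{−s/(M² e^{iθ})}`. -/
theorem borel_transform_cauchy_kernel_pow
    (M2 : ℝ) (hM2 : 0 < M2) (θ : ℝ) (hθ : θ ∈ Set.Ioo (-π) π)
    (s : ℝ) (hs : 0 ≤ s) (k : ℕ) (hk : 1 ≤ k)
    (f : ℝ → ℂ)
    (hf : ∀ X : ℝ, 0 < X →
      f X = 1 / ((s : ℂ) + (X : ℂ) * Complex.exp (θ * Complex.I)) ^ k) :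
    Tendsto
      (fun n : ℕ =>
        (((n : ℂ) * (M2 : ℂ)) ^ n / (Nat.factorial (n - 1) : ℂ)) * (-1 : ℂ) ^ n *
          iteratedDeriv n f ((n : ℝ) * M2))
      atTop
      (nhds ((1 / (Nat.factorial (k - 1) : ℂ)) *
        ((M2 : ℂ) * Complex.exp (θ * Complex.I)) ^ (-(k : ℤ)) *
        Complex.exp (-(s : ℂ) / ((M2 : ℂ) * Complex.exp (θ * Complex.I))))) :=
  borel_transform_cauchy_kernel_pow_general M2 hM2 θ s k hk f hf
end

section
/- Let M² > 0, θ ∈ ℝ, and let k ≥ 1 be an integer. Define f : (0,∞) → ℂ by f(X) = 1/(−X e^{iθ})^k = (−1)^k e^{−ikθ} X^{−k}. Then the Borel transform of f at Borel mass M² exists and equals lim_{n→∞} [(n M²)^n/(n−1)!] · (−1)^n · f^{(n)}(n M²) = [(−1)^k/(k−1)!] · (M² e^{iθ})^{−k}. -/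
/-!
On `(0, ∞)` we have `f = c • X ^ (-k)` with `c = ((-e^{iθ}) ^ k)⁻¹`, so
`(-1)^n f⁽ⁿ⁾(X) = c · k (k+1) ⋯ (k+n-1) · X^(-k-n)`. At `X = n M²` the Borel weight
`X^n / (n-1)!` turns this into `c · k.ascFactorial n / (n-1)! · (n M²)^(-k)`. Since both
`(k-1)! · k.ascFactorial n` and `(n-1)! · n.ascFactorial k` equal `(n+k-1)!`, this is
`c / (k-1)! · M^(-2k) · n.ascFactorial k / n^k`, and `n.ascFactorial k ~ n^k`.
-/

open Filter Complex Asymptotics Topology Finset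

lemma Nat.factorial_pred_mul_ascFactorial_comm {k n : ℕ} (hk : 0 < k) (hn : 0 < n) :
    (k - 1).factorial * k.ascFactorial n = (n - 1).factorial * n.ascFactorial k := by
  rw [Nat.factorial_mul_ascFactorial' k n hk, Nat.factorial_mul_ascFactorial' n k hn, add_comm]

lemma isEquivalent_ascFactorial {𝕜 : Type*} [RCLike 𝕜] (k : ℕ) :
    (fun n : ℕ ↦ (n.ascFactorial k : 𝕜)) ~[atTop] fun n ↦ (n : 𝕜) ^ k := by
  induction k with
  | zero => simpa using IsEquivalent.refl
  | succ k ih =>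
    simp_rw [Nat.ascFactorial_succ, Nat.cast_mul, pow_succ']
    refine IsEquivalent.mul ?_ ih
    have hz : ∀ᶠ n : ℕ in atTop, (n : 𝕜) + k ≠ 0 :=
      eventually_atTop.mpr ⟨1, fun n hn ↦ by exact_mod_cast (by omega : n + k ≠ 0)⟩
    push_cast
    refine (isEquivalent_iff_tendsto_one hz |>.mpr ?_).symm
    exact tendsto_natCast_div_add_atTop (k : 𝕜)

lemma iteratedDeriv_ofReal_zpow (m : ℤ) (n : ℕ) {x : ℝ} (hx : x ≠ 0) :
    iteratedDeriv n (fun y : ℝ ↦ (y : ℂ) ^ m) x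
      = (∏ i ∈ range n, ((m : ℂ) - i)) * (x : ℂ) ^ (m - n) := by
  induction n generalizing x with
  | zero => simp
  | succ n ih =>
    have hnear : iteratedDeriv n (fun y : ℝ ↦ (y : ℂ) ^ m) =ᶠ[𝓝 x]
        fun y ↦ (∏ i ∈ range n, ((m : ℂ) - i)) * (y : ℂ) ^ (m - n) := by
      filter_upwards [isOpen_ne.mem_nhds hx] with y hy using ih hy
    have hderiv := ((hasDerivAt_zpow (m - n) (x : ℂ) (.inl (ofReal_ne_zero.mpr hx))).comp_ofReal
      ).const_mul (∏ i ∈ range n, ((m : ℂ) - i))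
    rw [iteratedDeriv_succ, hnear.deriv_eq, hderiv.deriv, prod_range_succ]
    push_cast
    ring_nf

lemma neg_one_pow_mul_prod_range_neg_natCast_sub {R : Type*} [CommRing R] (k n : ℕ) :
    (-1 : R) ^ n * ∏ i ∈ range n, (-(k : R) - i) = k.ascFactorial n := by
  have hpull := pow_card_mul_prod (s := range n) (b := (-1 : R)) (f := fun i ↦ -(k : R) - i)
  rw [card_range] at hpull
  rw [hpull, Nat.ascFactorial_eq_prod_range, Nat.cast_prod]
  refine prod_congr rfl fun i _ ↦ ?_
  push_cast
  ring

lemma pow_div_factorial_mul_iteratedDeriv_ofReal_zpow_neg {k n : ℕ} (hk : 0 < k) (hn : 0 < n)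
    {x : ℝ} (hx : x ≠ 0) :
    (x : ℂ) ^ n / (n - 1).factorial * (-1) ^ n *
        iteratedDeriv n (fun y : ℝ ↦ (y : ℂ) ^ (-(k : ℤ))) x
      = n.ascFactorial k / (k - 1).factorial * (x : ℂ) ^ (-(k : ℤ)) := by
  have hx' : (x : ℂ) ≠ 0 := ofReal_ne_zero.mpr hx
  have hfact := congrArg (Nat.cast : ℕ → ℂ) (Nat.factorial_pred_mul_ascFactorial_comm hk hn)
  push_cast at hfact
  rw [iteratedDeriv_ofReal_zpow _ _ hx]
  push_cast
  calc _ = (-1) ^ n * (∏ i ∈ range n, (-(k : ℂ) - i)) / (n - 1).factorial * (x : ℂ) ^ (-(k : ℤ))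
          * ((x : ℂ) ^ n * ((x : ℂ) ^ n)⁻¹) := by
        rw [zpow_sub₀ hx', zpow_natCast]
        ring
    _ = k.ascFactorial n / (n - 1).factorial * (x : ℂ) ^ (-(k : ℤ)) := by
        rw [neg_one_pow_mul_prod_range_neg_natCast_sub, mul_inv_cancel₀ (pow_ne_zero n hx'),
          mul_one]
    _ = n.ascFactorial k / (k - 1).factorial * (x : ℂ) ^ (-(k : ℤ)) := by
        congr 1
        rw [div_eq_div_iff (by simp [Nat.factorial_ne_zero]) (by simp [Nat.factorial_ne_zero]),
          mul_comm, hfact, mul_comm]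

/-- Borel transform of `(1/z)^k` with `z = −X e^{iθ}`:
`B̂ (1/z)^k = ((−1)^k/(k−1)!) (1/(M² e^{iθ}))^k`. -/
theorem borel_transform_inverse_power
    (M2 : ℝ) (hM2 : 0 < M2) (θ : ℝ) (k : ℕ) (hk : 1 ≤ k)
    (f : ℝ → ℂ)
    (hf : ∀ X : ℝ, 0 < X →
      f X = 1 / (-(X : ℂ) * Complex.exp (θ * Complex.I)) ^ k) :
    Tendsto
      (fun n : ℕ =>
        (((n : ℂ) * (M2 : ℂ)) ^ n / (Nat.factorial (n - 1) : ℂ)) * (-1 : ℂ) ^ n *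
          iteratedDeriv n f ((n : ℝ) * M2))
      atTop
      (nhds (((-1 : ℂ) ^ k / (Nat.factorial (k - 1) : ℂ)) *
        ((M2 : ℂ) * Complex.exp (θ * Complex.I)) ^ (-(k : ℤ)))) := by
  set e := Complex.exp (θ * Complex.I)
  have hf_eq : Set.EqOn f (fun y : ℝ ↦ ((-e) ^ k)⁻¹ • (y : ℂ) ^ (-(k : ℤ))) (Set.Ioi 0) := by
    intro y hy
    dsimp only
    rw [hf y hy, smul_eq_mul, zpow_neg, zpow_natCast, one_div, ← mul_inv, ← mul_pow]
    ring_nf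
  have hderiv (n : ℕ) {x : ℝ} (hx : 0 < x) : iteratedDeriv n f x
      = ((-e) ^ k)⁻¹ * iteratedDeriv n (fun y : ℝ ↦ (y : ℂ) ^ (-(k : ℤ))) x := by
    rw [hf_eq.iteratedDeriv_of_isOpen isOpen_Ioi n hx, iteratedDeriv_fun_const_smul_field,
      smul_eq_mul]
  have hratio : Tendsto (fun n : ℕ ↦ (n.ascFactorial k : ℂ) / n ^ k) atTop (𝓝 1) :=
    (isEquivalent_iff_tendsto_one ((eventually_gt_atTop 0).mono fun n hn ↦
      pow_ne_zero k (Nat.cast_ne_zero.mpr hn.ne'))).mp (isEquivalent_ascFactorial k)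
  have hlim := hratio.const_mul ((-1 : ℂ) ^ k / (k - 1).factorial * ((M2 : ℂ) * e) ^ (-(k : ℤ)))
  rw [mul_one] at hlim
  refine hlim.congr' ?_
  filter_upwards [eventually_gt_atTop 0] with n hn
  have hx : 0 < (n : ℝ) * M2 := by positivity
  have hterm := pow_div_factorial_mul_iteratedDeriv_ofReal_zpow_neg hk hn hx.ne'
  push_cast at hterm
  rw [hderiv n hx, mul_left_comm, hterm]
  simp only [zpow_neg, zpow_natCast, neg_pow e, mul_pow, mul_inv, ← inv_pow, inv_neg_one]
  ring
end

section
/- Let M² > 0 be a real number, θ ∈ ℝ with cos θ ≥ 0, let s ≥ 0 be real and n ≥ 1 a natural number. Then the complex number (1 + s e^{−iθ}/(n M²))^{−(n+1)} satisfies the bound ‖(1 + s e^{−iθ}/(n M²))^{−(n+1)}‖ ≤ (1 + 2 s cos θ/(n M²))^{−n/2}. -/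
open Complex Real

/-!
For `Re w ≥ 0` we have `‖1 + w‖² = 1 + 2 Re w + ‖w‖² ≥ 1 + 2 Re w ≥ 1`, hence
`‖1 + w‖^{-(n+1)} ≤ ‖1 + w‖^{-n} = (‖1 + w‖²)^{-n/2} ≤ (1 + 2 Re w)^{-n/2}`.
The theorem is the case `w = s e^{-iθ}/(n M²)`, whose real part `s cos θ/(n M²)` is nonnegative.
-/

theorem Complex.one_add_two_mul_re_le_normSq_one_add (w : ℂ) :
    1 + 2 * w.re ≤ normSq (1 + w) := by
  rw [normSq_add, map_one, one_mul, conj_re]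
  linarith [normSq_nonneg w]

theorem Complex.norm_one_add_zpow_neg_succ_le {w : ℂ} (hw : 0 ≤ w.re) (n : ℕ) :
    ‖(1 + w) ^ (-((n : ℤ) + 1))‖ ≤ (1 + 2 * w.re) ^ (-(n : ℝ) / 2) := by
  have hnormSq : 1 + 2 * w.re ≤ ‖1 + w‖ ^ 2 := by
    rw [← normSq_eq_norm_sq]; exact one_add_two_mul_re_le_normSq_one_add w
  have hone : 1 ≤ ‖1 + w‖ := by nlinarith [norm_nonneg (1 + w)]
  calc ‖(1 + w) ^ (-((n : ℤ) + 1))‖ = (‖1 + w‖ ^ 2) ^ (-(n + 1 : ℝ) / 2) := by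
        rw [norm_zpow, ← Real.rpow_natCast, ← Real.rpow_mul (norm_nonneg _), ← Real.rpow_intCast]
        push_cast; ring_nf
    _ ≤ (‖1 + w‖ ^ 2) ^ (-(n : ℝ) / 2) :=
        Real.rpow_le_rpow_of_exponent_le (one_le_pow₀ hone) (by linarith)
    _ ≤ (1 + 2 * w.re) ^ (-(n : ℝ) / 2) :=
        Real.rpow_le_rpow_of_nonpos (by linarith) hnormSq (by
          have : (0:ℝ) ≤ n := n.cast_nonneg
          linarith)

theorem Complex.re_ofReal_mul_exp_neg_mul_I_div (s θ r : ℝ) :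
    ((s : ℂ) * exp (-(θ * I)) / r).re = s * Real.cos θ / r := by
  rw [div_ofReal_re, re_ofReal_mul, ← neg_mul, ← ofReal_neg, exp_ofReal_mul_I_re, Real.cos_neg]

theorem kernel_domination_bound_general
    (M2 : ℝ) (hM2 : 0 < M2) (θ : ℝ) (hθ : 0 ≤ Real.cos θ)
    (s : ℝ) (hs : 0 ≤ s) (n : ℕ) :
    ‖((1 : ℂ) + (s : ℂ) * Complex.exp (-(θ * Complex.I)) / ((n : ℂ) * (M2 : ℂ))) ^
        (-((n : ℤ) + 1))‖ ≤
      (1 + 2 * s * Real.cos θ / ((n : ℝ) * M2)) ^ (-(n : ℝ) / 2) := by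
  have hre := re_ofReal_mul_exp_neg_mul_I_div s θ (n * M2)
  push_cast at hre
  have hre_nonneg : 0 ≤ ((s : ℂ) * exp (-(θ * I)) / ((n : ℂ) * (M2 : ℂ))).re := by
    rw [hre]; positivity
  have hbound := norm_one_add_zpow_neg_succ_le hre_nonneg n
  rwa [hre, ← mul_div_assoc, ← mul_assoc] at hbound

/-- The domination estimate of Appendix B:
`‖(1 + s e^{−iθ}/(n M²))^{−(n+1)}‖ ≤ (1 + 2 s cos θ/(n M²))^{−n/2}` for `cos θ ≥ 0`. -/
theorem kernel_domination_bound
    (M2 : ℝ) (hM2 : 0 < M2) (θ : ℝ) (hθ : 0 ≤ Real.cos θ)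
    (s : ℝ) (hs : 0 ≤ s) (n : ℕ) (hn : 1 ≤ n) :
    ‖((1 : ℂ) + (s : ℂ) * Complex.exp (-(θ * Complex.I)) / ((n : ℂ) * (M2 : ℂ))) ^
        (-((n : ℤ) + 1))‖ ≤
      (1 + 2 * s * Real.cos θ / ((n : ℝ) * M2)) ^ (-(n : ℝ) / 2) :=
  kernel_domination_bound_general M2 hM2 θ hθ s hs n
end
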